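/- Let 𝔉 be a Fitting formation and n a natural number. Then the class 𝔉ⁿ (the n-fold formation product of 𝔉 with itself) equals the class of all finite groups G with h_𝔉(G) ≤ n. -/

import Mathlib

open scoped Pointwise

/-! Subgroup-valued functions ("functorials") on finite groups, Plotkin's upper products,
iterated series and heights, the generalized Fitting subgroup, `p`-soluble radicals,
non-`p`-soluble length, Fitting formations, and (mutually/totally) permutable products. -/

/-- A subgroup-valued function on all finite groups. -/
abbrev GFun : Type 1 := ∀ (G : Type) [Group G] [Finite G], Subgroup G

/-- A functorial: `γ` commutes with isomorphisms, `f (γ G) = γ (f G)`. -/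
def IsoInvariant (γ : GFun) : Prop :=
  ∀ (G H : Type) [Group G] [Finite G] [Group H] [Finite H] (e : G ≃* H),
    (γ G).map e.toMonoidHom = γ H

/-- Property (F1): `f (γ G) ⊆ γ (f G)` for every epimorphism `f`. -/
def SatF1 (γ : GFun) : Prop :=
  ∀ (G H : Type) [Group G] [Finite G] [Group H] [Finite H] (f : G →* H),
    Function.Surjective f → (γ G).map f ≤ γ H

/-- Property (F2): `γ N ⊆ γ G` for every normal subgroup `N ⊴ G`. -/
def SatF2 (γ : GFun) : Prop :=
  ∀ (G : Type) [Group G] [Finite G] (N : Subgroup G), N.Normal →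
    (γ ↥N).map N.subtype ≤ γ G

/-- Property (F3): `γ G ∩ N ⊆ γ N` for every normal subgroup `N ⊴ G`. -/
def SatF3 (γ : GFun) : Prop :=
  ∀ (G : Type) [Group G] [Finite G] (N : Subgroup G), N.Normal →
    (γ G).comap N.subtype ≤ γ ↥N

/-- `γ` is idempotent: `γ (γ G) = γ G`. -/
def IdemF (γ : GFun) : Prop :=
  ∀ (G : Type) [Group G] [Finite G], (γ ↥(γ G)).map (γ G).subtype = γ G

/-- `N ⊆ γ G` for every normal subgroup `N ⊴ G` with `γ N = N`. -/
def PlotkinClosed (γ : GFun) : Prop :=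
  ∀ (G : Type) [Group G] [Finite G] (N : Subgroup G), N.Normal → γ ↥N = ⊤ → N ≤ γ G

/-- `γ G` is a normal subgroup of `G` for every finite group `G`. -/
def NormalValued (γ : GFun) : Prop :=
  ∀ (G : Type) [Group G] [Finite G], (γ G).Normal

/-- A functorial takes normal (indeed characteristic) values. -/
theorem IsoInvariant.normalValued {γ : GFun} (h : IsoInvariant γ) : NormalValued γ := by
  intro G _ _
  refine ⟨fun n hn g => ?_⟩
  have key := h G G (MulAut.conj g)
  rw [← key]
  exact ⟨n, hn, by simp [MulAut.conj]⟩

theorem normal_sSup {G : Type} [Group G] {S : Set (Subgroup G)}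
    (hS : ∀ N ∈ S, N.Normal) : (sSup S).Normal := by
  have hU : sSup S = Subgroup.closure (⋃ N ∈ S, (N : Set G)) := by
    apply le_antisymm
    · exact sSup_le fun N hN x hx =>
        Subgroup.subset_closure (Set.mem_iUnion₂.2 ⟨N, hN, hx⟩)
    · rw [Subgroup.closure_le]
      intro x hx
      obtain ⟨N, hN, hxN⟩ := Set.mem_iUnion₂.1 hx
      exact le_sSup hN hxN
  refine ⟨fun n hn g => ?_⟩
  rw [hU] at hn ⊢
  induction hn using Subgroup.closure_induction with
  | mem x hx =>
    obtain ⟨N, hN, hxN⟩ := Set.mem_iUnion₂.1 hx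
    exact Subgroup.subset_closure (Set.mem_iUnion₂.2 ⟨N, hN, (hS N hN).conj_mem x hxN g⟩)
  | one => simpa using Subgroup.one_mem _
  | mul x y hx hy ihx ihy =>
    have : g * (x * y) * g⁻¹ = (g * x * g⁻¹) * (g * y * g⁻¹) := by group
    rw [this]; exact mul_mem ihx ihy
  | inv x hx ihx =>
    have : g * x⁻¹ * g⁻¹ = (g * x * g⁻¹)⁻¹ := by group
    rw [this]; exact inv_mem ihx

theorem normal_inf {G : Type} [Group G] {M N : Subgroup G} (hM : M.Normal) (hN : N.Normal) :
    (M ⊓ N).Normal :=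
  ⟨fun n hn g => ⟨hM.conj_mem n hn.1 g, hN.conj_mem n hn.2 g⟩⟩

/-- The upper product `γ₂ ⋆ γ₁`: the preimage in `G` of `γ₁ (G ⧸ γ₂ G)`. -/
def starF (γ₂ γ₁ : GFun) (h : NormalValued γ₂) : GFun :=
  fun G _ _ =>
    letI : (γ₂ G).Normal := h G
    (γ₁ (G ⧸ γ₂ G)).comap (QuotientGroup.mk' (γ₂ G))

theorem starF_normalValued (γ₂ γ₁ : GFun) (h2 : NormalValued γ₂) (h1 : NormalValued γ₁) :
    NormalValued (starF γ₂ γ₁ h2) := by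
  intro G _ _
  letI : (γ₂ G).Normal := h2 G
  exact Subgroup.Normal.comap (h1 _) _

/-- The iterated `γ`-series of a finite group, with normality of each term. -/
def gSeriesAux (γ : GFun) (h : NormalValued γ) (G : Type) [Group G] [Finite G] :
    ℕ → {H : Subgroup G // H.Normal}
  | 0 => ⟨⊥, inferInstance⟩
  | n + 1 =>
    let P := gSeriesAux γ h G n
    letI : P.1.Normal := P.2
    ⟨(γ (G ⧸ P.1)).comap (QuotientGroup.mk' P.1), Subgroup.Normal.comap (h _) _⟩

/-- The iterated `γ`-series: `γ₍₀₎(G) = 1` and `γ₍ᵢ₊₁₎(G)` is the preimage of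
`γ (G ⧸ γ₍ᵢ₎(G))`. -/
def gSeries (γ : GFun) (h : NormalValued γ) (G : Type) [Group G] [Finite G] (n : ℕ) :
    Subgroup G := (gSeriesAux γ h G n).1

/-- The `γ`-height: the least `h` with `γ₍ₕ₎(G) = G`, or `∞` if no such `h` exists. -/
noncomputable def gHeight (γ : GFun) (h : NormalValued γ) (G : Type) [Group G] [Finite G] :
    ℕ∞ := sInf {n : ℕ∞ | ∃ m : ℕ, n = (m : ℕ∞) ∧ gSeries γ h G m = ⊤}

/-- `H/K` is a chief factor of `G`. -/
def IsChiefFactor {G : Type} [Group G] (K H : Subgroup G) : Prop :=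
  K.Normal ∧ H.Normal ∧ K < H ∧
    ∀ L : Subgroup G, L.Normal → K ≤ L → L ≤ H → L = K ∨ L = H

/-- A finite group is quasinilpotent if every element induces an inner automorphism on
every chief factor. -/
def IsQuasinilpotent (G : Type) [Group G] [Finite G] : Prop :=
  ∀ K H : Subgroup G, IsChiefFactor K H →
    ∀ g : G, ∃ h ∈ H, ∀ x ∈ H, g * x * g⁻¹ * (h * x * h⁻¹)⁻¹ ∈ K

/-- A finite group is `p`-soluble if every chief factor is a `p`-group or a `p'`-group. -/
def IsPSoluble (p : ℕ) (G : Type) [Group G] [Finite G] : Prop :=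
  ∀ K H : Subgroup G, IsChiefFactor K H →
    (∀ x ∈ H, ∃ n : ℕ, x ^ (p ^ n) ∈ K) ∨
    (∀ x ∈ H, ∃ n : ℕ, 0 < n ∧ ¬ p ∣ n ∧ x ^ n ∈ K)

/-- The generalized Fitting subgroup `F*(G)`: the largest normal quasinilpotent subgroup. -/
def genFitting : GFun := fun G _ _ => sSup {N : Subgroup G | N.Normal ∧ IsQuasinilpotent ↥N}

theorem genFitting_normal : NormalValued genFitting :=
  fun _ _ _ => normal_sSup fun _ hN => hN.1

/-- The generalized Fitting height `h*`. -/
noncomputable def hStar (G : Type) [Group G] [Finite G] : ℕ∞ :=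
  gHeight genFitting genFitting_normal G

/-- The `p`-soluble radical `R_p(G)`: the largest normal `p`-soluble subgroup. -/
def pRadical (p : ℕ) : GFun := fun G _ _ => sSup {N : Subgroup G | N.Normal ∧ IsPSoluble p ↥N}

theorem pRadical_normal (p : ℕ) : NormalValued (pRadical p) :=
  fun _ _ _ => normal_sSup fun _ hN => hN.1

/-- `F̄_p = R_p ⋆ F* ⋆ R_p`. -/
def pBarFitting (p : ℕ) : GFun :=
  starF (starF (pRadical p) genFitting (pRadical_normal p)) (pRadical p)
    (starF_normalValued _ _ (pRadical_normal p) genFitting_normal)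

theorem pBarFitting_normal (p : ℕ) : NormalValued (pBarFitting p) :=
  starF_normalValued _ _ _ (pRadical_normal p)

/-- The Frattini subgroup, as a subgroup-valued function on finite groups. -/
def frattiniF : GFun := fun G _ _ => frattini G

theorem frattiniF_normal : NormalValued frattiniF := fun G _ _ => by
  show (frattini G).Normal
  exact Subgroup.normal_of_characteristic _

/-- Förster's functorial `F̃ = Φ ⋆ F*`: `F̃(G)/Φ(G) = F*(G/Φ(G))`. -/
def tildeFitting : GFun := starF frattiniF genFitting frattiniF_normal

theorem tildeFitting_normal : NormalValued tildeFitting :=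
  starF_normalValued _ _ frattiniF_normal genFitting_normal

/-- The non-Frattini length `h̃`. -/
noncomputable def hTilde (G : Type) [Group G] [Finite G] : ℕ∞ :=
  gHeight tildeFitting tildeFitting_normal G

/-- `Q` is a (non-empty) direct product of simple groups (nonabelian ones if `nonab`). -/
def IsDirectProdOfSimple (nonab : Bool) (Q : Type) [Group Q] : Prop :=
  ∃ (n : ℕ) (S : Fin n → GrpCat.{0}), 0 < n ∧ (∀ i, IsSimpleGroup (S i)) ∧
    (nonab → ∀ i, ∃ a b : (S i), a * b ≠ b * a) ∧
    Nonempty (Q ≃* ((i : Fin n) → (S i)))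

/-- The factor `H/K` (for `K ⊴ G`) is `p`-soluble. -/
def FactorPSoluble (p : ℕ) {G : Type} [Group G] [Finite G] (K H : Subgroup G)
    (hK : K.Normal) : Prop :=
  letI : (K.subgroupOf H).Normal := hK.subgroupOf H
  IsPSoluble p (↥H ⧸ K.subgroupOf H)

/-- The factor `H/K` is a non-empty direct product of (nonabelian) simple groups. -/
def FactorSimpleProd (nonab : Bool) {G : Type} [Group G] [Finite G] (K H : Subgroup G)
    (hK : K.Normal) : Prop :=
  letI : (K.subgroupOf H).Normal := hK.subgroupOf H
  IsDirectProdOfSimple nonab (↥H ⧸ K.subgroupOf H)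

/-- `G` has a normal series `1 = G₀ ≤ G₁ ≤ ⋯ ≤ G₂ₕ₊₁ = G` in which the factors
`Gᵢ₊₁/Gᵢ` for `i` even are `p`-soluble (possibly trivial) and for `i` odd are
non-empty direct products of nonabelian simple groups. -/
def HasLambdaSeries (p : ℕ) (G : Type) [Group G] [Finite G] (h : ℕ) : Prop :=
  ∃ c : Fin (2 * h + 2) → Subgroup G, Monotone c ∧ c 0 = ⊥ ∧ c (Fin.last _) = ⊤ ∧
    ∃ hn : ∀ i, (c i).Normal,
      ∀ i : Fin (2 * h + 1),
        if (i : ℕ) % 2 = 0 then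
          FactorPSoluble p (c i.castSucc) (c i.succ) (hn _)
        else
          FactorSimpleProd true (c i.castSucc) (c i.succ) (hn _)

/-- The non-`p`-soluble length `λ_p(G)`: the least `h` admitting such a series. -/
noncomputable def lambdaP (p : ℕ) (G : Type) [Group G] [Finite G] : ℕ∞ :=
  sInf {n : ℕ∞ | ∃ h : ℕ, n = (h : ℕ∞) ∧ HasLambdaSeries p G h}

/-- A class of finite groups. -/
abbrev GClass : Type 1 := ∀ (G : Type) [Group G] [Finite G], Prop

/-- Closed under homomorphic images. -/
def QuotClosed (𝔉 : GClass) : Prop :=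
  ∀ (G H : Type) [Group G] [Finite G] [Group H] [Finite H] (f : G →* H),
    Function.Surjective f → 𝔉 G → 𝔉 H

/-- If `G/M, G/N ∈ 𝔉` then `G/(M ∩ N) ∈ 𝔉`. -/
def InterClosed (𝔉 : GClass) : Prop :=
  ∀ (G : Type) [Group G] [Finite G] (M N : Subgroup G) (hM : M.Normal) (hN : N.Normal),
    (letI := hM; 𝔉 (G ⧸ M)) → (letI := hN; 𝔉 (G ⧸ N)) →
      (letI : (M ⊓ N).Normal := normal_inf hM hN; 𝔉 (G ⧸ (M ⊓ N)))

/-- Closed under normal subgroups. -/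
def NormalClosed (𝔉 : GClass) : Prop :=
  ∀ (G : Type) [Group G] [Finite G] (N : Subgroup G), N.Normal → 𝔉 G → 𝔉 ↥N

/-- A group is in `𝔉` whenever it is the product of two normal `𝔉`-subgroups. -/
def NormalProdClosed (𝔉 : GClass) : Prop :=
  ∀ (G : Type) [Group G] [Finite G] (M N : Subgroup G), M.Normal → N.Normal →
    𝔉 ↥M → 𝔉 ↥N → M ⊔ N = ⊤ → 𝔉 G

/-- A Fitting formation. -/
def IsFittingFormation (𝔉 : GClass) : Prop :=
  QuotClosed 𝔉 ∧ InterClosed 𝔉 ∧ NormalClosed 𝔉 ∧ NormalProdClosed 𝔉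

/-- The `𝔉`-radical: the largest normal `𝔉`-subgroup. -/
def fRadical (𝔉 : GClass) : GFun := fun G _ _ => sSup {N : Subgroup G | N.Normal ∧ 𝔉 ↥N}

theorem fRadical_normal (𝔉 : GClass) : NormalValued (fRadical 𝔉) :=
  fun _ _ _ => normal_sSup fun _ hN => hN.1

/-- The `𝔉`-residual: the smallest normal subgroup with quotient in `𝔉`. -/
def fResidual (𝔉 : GClass) (G : Type) [Group G] [Finite G] : Subgroup G :=
  sInf {N : Subgroup G | ∃ hN : N.Normal, (letI := hN; 𝔉 (G ⧸ N))}

/-- The `𝔉`-height `h_𝔉`. -/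
noncomputable def fHeight (𝔉 : GClass) (G : Type) [Group G] [Finite G] : ℕ∞ :=
  gHeight (fRadical 𝔉) (fRadical_normal 𝔉) G

/-- The `n`-fold formation product `𝔉ⁿ` (with `𝔉⁰` the class of trivial groups):
`G ∈ 𝔉ⁿ⁺¹` iff the `𝔉`-residual `G^𝔉` lies in `𝔉ⁿ`. -/
def fPow (𝔉 : GClass) : ℕ → GClass
  | 0 => fun G _ _ => Subsingleton G
  | n + 1 => fun G _ _ => fPow 𝔉 n ↥(fResidual 𝔉 G)

/-- `A` is a subnormal subgroup of `G`. -/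
def IsSubnormalIn {G : Type} [Group G] (A : Subgroup G) : Prop :=
  ∃ (n : ℕ) (c : Fin (n + 1) → Subgroup G), c 0 = A ∧ c (Fin.last n) = ⊤ ∧
    ∀ i : Fin n, c i.castSucc ≤ c i.succ ∧ ((c i.castSucc).subgroupOf (c i.succ)).Normal

/-- `G` is the mutually permutable product of its subgroups `A` and `B`. -/
def MutuallyPermutable {G : Type} [Group G] (A B : Subgroup G) : Prop :=
  (A : Set G) * (B : Set G) = Set.univ ∧
  (∀ H : Subgroup G, H ≤ B → (A : Set G) * (H : Set G) = (H : Set G) * (A : Set G)) ∧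
  (∀ K : Subgroup G, K ≤ A → (B : Set G) * (K : Set G) = (K : Set G) * (B : Set G))

/-- `G` is the totally permutable product of its subgroups `A` and `B`. -/
def TotallyPermutable {G : Type} [Group G] (A B : Subgroup G) : Prop :=
  (A : Set G) * (B : Set G) = Set.univ ∧
  ∀ H K : Subgroup G, H ≤ A → K ≤ B → (H : Set G) * (K : Set G) = (K : Set G) * (H : Set G)


/-! ### Auxiliary lemmas -/

section Aux

theorem normal_sInf' {G : Type} [Group G] {S : Set (Subgroup G)}
    (hS : ∀ N ∈ S, N.Normal) : (sInf S).Normal := by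
  refine ⟨fun n hn g => ?_⟩
  rw [Subgroup.mem_sInf] at hn ⊢
  exact fun N hN => (hS N hN).conj_mem n (hn N hN) g

theorem fResidual_normal (𝔉 : GClass) (G : Type) [Group G] [Finite G] :
    (fResidual 𝔉 G).Normal :=
  normal_sInf' fun _ hN => hN.1

theorem sSup_mem_finite {α : Type*} [CompleteLattice α] [Finite α] {S : Set α}
    (hne : S.Nonempty) (hcl : ∀ a ∈ S, ∀ b ∈ S, a ⊔ b ∈ S) : sSup S ∈ S := by
  classical
  have key : ∀ u : Finset α, ↑u ⊆ S → u.Nonempty → sSup (↑u : Set α) ∈ S := by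
    intro u
    induction u using Finset.induction_on with
    | empty => intro _ hne'; exact absurd hne' (by simp)
    | @insert a u ha ih =>
      intro hsub _
      have haS : a ∈ S := hsub (Finset.mem_insert_self a u)
      rcases u.eq_empty_or_nonempty with rfl | hune
      · simpa using haS
      · have husub : ↑u ⊆ S := fun x hx => hsub (Finset.mem_insert_of_mem hx)
        have := ih husub hune
        rw [Finset.coe_insert, sSup_insert]
        exact hcl a haS _ this
  have hfin : S.Finite := Set.toFinite S
  have := key hfin.toFinset (by simp) (by simpa [Set.Finite.toFinset_nonempty] using hne)
  rwa [Set.Finite.coe_toFinset] at this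

theorem sInf_mem_finite {α : Type*} [CompleteLattice α] [Finite α] {S : Set α}
    (hne : S.Nonempty) (hcl : ∀ a ∈ S, ∀ b ∈ S, a ⊓ b ∈ S) : sInf S ∈ S := by
  classical
  have key : ∀ u : Finset α, ↑u ⊆ S → u.Nonempty → sInf (↑u : Set α) ∈ S := by
    intro u
    induction u using Finset.induction_on with
    | empty => intro _ hne'; exact absurd hne' (by simp)
    | @insert a u ha ih =>
      intro hsub _
      have haS : a ∈ S := hsub (Finset.mem_insert_self a u)
      rcases u.eq_empty_or_nonempty with rfl | hune
      · simpa using haS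
      · have husub : ↑u ⊆ S := fun x hx => hsub (Finset.mem_insert_of_mem hx)
        have := ih husub hune
        rw [Finset.coe_insert, sInf_insert]
        exact hcl a haS _ this
  have hfin : S.Finite := Set.toFinite S
  have := key hfin.toFinset (by simp) (by simpa [Set.Finite.toFinset_nonempty] using hne)
  rwa [Set.Finite.coe_toFinset] at this

variable {𝔉 : GClass}

/-- `𝔉` transfers along surjections. -/
theorem Fsurj (hQ : QuotClosed 𝔉) {A B : Type} [Group A] [Finite A] [Group B] [Finite B]
    (f : A →* B) (hf : Function.Surjective f) (hA : 𝔉 A) : 𝔉 B := hQ A B f hf hA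

/-- `𝔉` transfers along isomorphisms. -/
theorem Fiso (hQ : QuotClosed 𝔉) {A B : Type} [Group A] [Finite A] [Group B] [Finite B]
    (e : A ≃* B) (hA : 𝔉 A) : 𝔉 B := Fsurj hQ e.toMonoidHom e.surjective hA

/-- `𝔉` transfers from one surjective image to a smaller one. -/
theorem Ftrans (hQ : QuotClosed 𝔉) {A B C : Type} [Group A] [Finite A] [Group B] [Finite B]
    [Group C] [Finite C] (f : A →* B) (g : A →* C) (hf : Function.Surjective f)
    (hg : Function.Surjective g) (hker : f.ker ≤ g.ker) (hB : 𝔉 B) : 𝔉 C := by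
  have e := QuotientGroup.quotientKerEquivOfSurjective f hf
  have hA : 𝔉 (A ⧸ f.ker) := Fiso hQ e.symm hB
  refine Fsurj hQ (QuotientGroup.lift f.ker g hker) ?_ hA
  intro c
  obtain ⟨a, rfl⟩ := hg c
  exact ⟨QuotientGroup.mk a, rfl⟩

/-- The radical is trivial or lies in `𝔉`. -/
theorem fRadical_cases (hF : IsFittingFormation 𝔉) (G : Type) [Group G] [Finite G] :
    fRadical 𝔉 G = ⊥ ∨ 𝔉 ↥(fRadical 𝔉 G) := by
  obtain ⟨hQ, hI, hN, hP⟩ := hF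
  set S := {N : Subgroup G | N.Normal ∧ 𝔉 ↥N} with hS
  by_cases hne : S.Nonempty
  · right
    have hfin : Finite (Subgroup G) :=
      Finite.of_injective (fun H => (H : Set G)) SetLike.coe_injective
    have hmem : sSup S ∈ S := by
      refine sSup_mem_finite hne ?_
      rintro a ⟨haN, haF⟩ b ⟨hbN, hbF⟩
      have habN : (a ⊔ b).Normal := by
        rw [← sSup_pair]
        exact normal_sSup (by rintro N (rfl | rfl) <;> assumption)
      refine ⟨habN, ?_⟩
      refine hP ↥(a ⊔ b) (a.subgroupOf (a ⊔ b)) (b.subgroupOf (a ⊔ b))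
        (haN.subgroupOf _) (hbN.subgroupOf _) ?_ ?_ ?_
      · exact Fiso hQ (Subgroup.subgroupOfEquivOfLe le_sup_left).symm haF
      · exact Fiso hQ (Subgroup.subgroupOfEquivOfLe le_sup_right).symm hbF
      · apply Subgroup.map_injective (a ⊔ b).subtype_injective
        rw [Subgroup.map_sup, Subgroup.subgroupOf_map_subtype, Subgroup.subgroupOf_map_subtype,
          ← MonoidHom.range_eq_map, Subgroup.range_subtype,
          inf_of_le_left le_sup_left, inf_of_le_left le_sup_right]
    exact hmem.2
  · left
    rw [Set.not_nonempty_iff_eq_empty] at hne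
    show sSup S = ⊥
    rw [hne, sSup_empty]

/-- If `𝔉 G` then the radical is all of `G`. -/
theorem fRadical_eq_top (hF : IsFittingFormation 𝔉) (G : Type) [Group G] [Finite G]
    (hG : 𝔉 G) : fRadical 𝔉 G = ⊤ :=
  le_antisymm le_top (le_sSup ⟨inferInstance, Fiso hF.1 Subgroup.topEquiv.symm hG⟩)

/-- The residual is all of `G` or has `𝔉`-quotient. -/
theorem fResidual_cases (hF : IsFittingFormation 𝔉) (G : Type) [Group G] [Finite G] :
    fResidual 𝔉 G = ⊤ ∨
      (letI := fResidual_normal 𝔉 G; 𝔉 (G ⧸ fResidual 𝔉 G)) := by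
  obtain ⟨hQ, hI, hN, hP⟩ := hF
  set S := {N : Subgroup G | ∃ hN : N.Normal, (letI := hN; 𝔉 (G ⧸ N))} with hS
  by_cases hne : S.Nonempty
  · right
    have hfin : Finite (Subgroup G) :=
      Finite.of_injective (fun H => (H : Set G)) SetLike.coe_injective
    have hmem : sInf S ∈ S := by
      refine sInf_mem_finite hne ?_
      rintro a ⟨haN, haF⟩ b ⟨hbN, hbF⟩
      exact ⟨normal_inf haN hbN, hI G a b haN hbN haF hbF⟩
    obtain ⟨hN', hQ'⟩ := hmem
    exact hQ'
  · left
    rw [Set.not_nonempty_iff_eq_empty] at hne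
    show sInf S = ⊤
    rw [hne, sInf_empty]

end Aux


section SeriesBasics

variable (γ : GFun) (h : NormalValued γ) (G : Type) [Group G] [Finite G]

theorem gSeries_zero : gSeries γ h G 0 = ⊥ := rfl

theorem gSeries_normal (n : ℕ) : (gSeries γ h G n).Normal := (gSeriesAux γ h G n).2

theorem gSeries_succ (n : ℕ) :
    gSeries γ h G (n + 1) =
      (letI := gSeries_normal γ h G n
       (γ (G ⧸ gSeries γ h G n)).comap (QuotientGroup.mk' (gSeries γ h G n))) := rfl

theorem gSeries_le_succ (n : ℕ) : gSeries γ h G n ≤ gSeries γ h G (n + 1) := by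
  letI := gSeries_normal γ h G n
  rw [gSeries_succ]
  intro x hx
  simp only [Subgroup.mem_comap]
  have hx' : x ∈ (QuotientGroup.mk' (gSeries γ h G n)).ker := by
    rwa [QuotientGroup.ker_mk']
  rw [MonoidHom.mem_ker] at hx'
  rw [hx']; exact one_mem _

theorem gSeries_mono {m n : ℕ} (hmn : m ≤ n) : gSeries γ h G m ≤ gSeries γ h G n := by
  induction n with
  | zero => simp_all
  | succ n ih =>
    rcases Nat.lt_or_ge m (n + 1) with hlt | hge
    · exact le_trans (ih (Nat.lt_succ_iff.mp hlt)) (gSeries_le_succ γ h G n)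
    · have : m = n + 1 := le_antisymm hmn hge
      simp [this]

theorem gSeries_top_mono {m n : ℕ} (hm : gSeries γ h G m = ⊤) (hmn : m ≤ n) :
    gSeries γ h G n = ⊤ :=
  le_antisymm le_top (hm ▸ gSeries_mono γ h G hmn)

theorem gHeight_le_iff (n : ℕ) :
    gHeight γ h G ≤ (n : ℕ∞) ↔ gSeries γ h G n = ⊤ := by
  constructor
  · intro hle
    by_contra hne
    have hbig : ∀ x ∈ {x : ℕ∞ | ∃ m : ℕ, x = (m : ℕ∞) ∧ gSeries γ h G m = ⊤},
        ((n : ℕ∞) + 1) ≤ x := by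
      rintro x ⟨m, rfl, hm⟩
      have hnm : n < m := by
        by_contra hc
        push_neg at hc
        exact hne (gSeries_top_mono γ h G hm hc)
      exact_mod_cast hnm
    have h1 : ((n : ℕ∞) + 1) ≤ gHeight γ h G := le_sInf hbig
    have h2 : ((n : ℕ∞) + 1) ≤ (n : ℕ∞) := h1.trans hle
    have h3 : ((n : ℕ∞)) < (n : ℕ∞) + 1 :=
      (ENat.lt_add_one_iff (ENat.coe_ne_top n)).mpr le_rfl
    exact absurd h2 (not_le.mpr h3)
  · intro htop
    exact sInf_le ⟨n, rfl, htop⟩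

end SeriesBasics

section RadIso

variable {𝔉 : GClass}

theorem fRadical_map_le (hF : IsFittingFormation 𝔉) {G H : Type} [Group G] [Finite G]
    [Group H] [Finite H] (e : G ≃* H) :
    (fRadical 𝔉 G).map e.toMonoidHom ≤ fRadical 𝔉 H := by
  show Subgroup.map e.toMonoidHom (sSup _) ≤ _
  rw [(Subgroup.gc_map_comap e.toMonoidHom).l_sSup]
  refine iSup₂_le ?_
  rintro N ⟨hN, hNF⟩
  refine le_sSup ⟨hN.map e.toMonoidHom e.surjective, ?_⟩
  exact Fiso hF.1 (MulEquiv.subgroupMap e N) hNF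

theorem fRadical_map_equiv (hF : IsFittingFormation 𝔉) {G H : Type} [Group G] [Finite G]
    [Group H] [Finite H] (e : G ≃* H) :
    (fRadical 𝔉 G).map e.toMonoidHom = fRadical 𝔉 H := by
  refine le_antisymm (fRadical_map_le hF e) ?_
  intro x hx
  have h2 := fRadical_map_le hF e.symm
  have hx' : e.symm x ∈ fRadical 𝔉 G := h2 ⟨x, hx, rfl⟩
  exact ⟨e.symm x, hx', by simp⟩

end RadIso


section SeriesIso

variable {𝔉 : GClass}

theorem gSeries_map_equiv (hF : IsFittingFormation 𝔉) :
    ∀ (i : ℕ) (G H : Type) [Group G] [Finite G] [Group H] [Finite H] (e : G ≃* H),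
      (gSeries (fRadical 𝔉) (fRadical_normal 𝔉) G i).map e.toMonoidHom =
        gSeries (fRadical 𝔉) (fRadical_normal 𝔉) H i := by
  intro i
  induction i with
  | zero =>
    intro G H _ _ _ _ e
    rw [gSeries_zero, gSeries_zero, Subgroup.map_bot]
  | succ i ih =>
    intro G H _ _ _ _ e
    letI hGn := gSeries_normal (fRadical 𝔉) (fRadical_normal 𝔉) G i
    letI hHn := gSeries_normal (fRadical 𝔉) (fRadical_normal 𝔉) H i
    have hmap : Subgroup.map (↑e) (gSeries (fRadical 𝔉) (fRadical_normal 𝔉) G i) =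
        gSeries (fRadical 𝔉) (fRadical_normal 𝔉) H i := ih G H e
    set ebar := QuotientGroup.congr _ _ e hmap with hebar
    rw [gSeries_succ, gSeries_succ]
    ext x
    rw [Subgroup.mem_map_equiv]
    simp only [Subgroup.mem_comap]
    have hrad : (fRadical 𝔉 (G ⧸ gSeries (fRadical 𝔉) (fRadical_normal 𝔉) G i)).map
        ebar.toMonoidHom = fRadical 𝔉 (H ⧸ gSeries (fRadical 𝔉) (fRadical_normal 𝔉) H i) :=
      fRadical_map_equiv hF ebar
    rw [← hrad, Subgroup.mem_map_equiv]
    have hcomm : ∀ y : G,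
        ebar (QuotientGroup.mk' _ y) = QuotientGroup.mk' _ (e y) := fun y => by
      simp [hebar, QuotientGroup.congr]
    have hkey : ebar.symm (QuotientGroup.mk' _ x) = QuotientGroup.mk' _ (e.symm x) := by
      have h1 := hcomm (e.symm x)
      rw [MulEquiv.apply_symm_apply] at h1
      rw [← h1, MulEquiv.symm_apply_apply]
    rw [hkey]

theorem gSeries_subtype_normal (hF : IsFittingFormation 𝔉) {G : Type} [Group G] [Finite G]
    (N : Subgroup G) (hN : N.Normal) (i : ℕ) :
    ((gSeries (fRadical 𝔉) (fRadical_normal 𝔉) ↥N i).map N.subtype).Normal := by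
  letI := hN
  refine ⟨fun x hx g => ?_⟩
  obtain ⟨s, hs, rfl⟩ := hx
  have hinv := gSeries_map_equiv hF i ↥N ↥N ((MulAut.conjNormal g : MulAut ↥N) : ↥N ≃* ↥N)
  refine ⟨((MulAut.conjNormal g : MulAut ↥N)) s, ?_, ?_⟩
  · rw [← hinv]; exact ⟨s, hs, rfl⟩
  · show ((((MulAut.conjNormal g : MulAut ↥N)) s : ↥N) : G) = g * (s : G) * g⁻¹
    rw [MulAut.conjNormal_apply]

end SeriesIso


section UpDown

variable {𝔉 : GClass}

theorem gSeries_map_le (hF : IsFittingFormation 𝔉) {G : Type} [Group G] [Finite G]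
    (N : Subgroup G) (hN : N.Normal) :
    ∀ i : ℕ, (gSeries (fRadical 𝔉) (fRadical_normal 𝔉) ↥N i).map N.subtype ≤
      gSeries (fRadical 𝔉) (fRadical_normal 𝔉) G i := by
  letI := hN
  intro i
  induction i with
  | zero => rw [gSeries_zero, gSeries_zero, Subgroup.map_bot]
  | succ i ih =>
    letI hSi : (gSeries (fRadical 𝔉) (fRadical_normal 𝔉) ↥N i).Normal :=
      gSeries_normal _ _ _ _
    letI hRi : (gSeries (fRadical 𝔉) (fRadical_normal 𝔉) G i).Normal :=
      gSeries_normal _ _ _ _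
    set Si := gSeries (fRadical 𝔉) (fRadical_normal 𝔉) ↥N i with hSidef
    set Ri := gSeries (fRadical 𝔉) (fRadical_normal 𝔉) G i with hRidef
    set πN := QuotientGroup.mk' Si with hπN
    set π := QuotientGroup.mk' Ri with hπ
    set T := fRadical 𝔉 (↥N ⧸ Si) with hT
    have hker : Si ≤ (π.comp N.subtype).ker := by
      intro s hs
      rw [MonoidHom.mem_ker, MonoidHom.comp_apply]
      refine MonoidHom.mem_ker.mp ?_
      rw [hπ, QuotientGroup.ker_mk']
      exact ih ⟨s, hs, rfl⟩
    set ξ : (↥N ⧸ Si) →* G ⧸ Ri := QuotientGroup.lift Si (π.comp N.subtype) hker with hξ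
    have hlift : ∀ m : ↥N, ξ (πN m) = π (m : G) := fun m => rfl
    set M := (gSeries (fRadical 𝔉) (fRadical_normal 𝔉) ↥N (i + 1)).map N.subtype with hM
    have hMnormal : M.Normal := gSeries_subtype_normal hF N hN (i + 1)
    set D := M.map π with hD
    have hDnormal : D.Normal := hMnormal.map π (QuotientGroup.mk'_surjective Ri)
    have hDeq : D = T.map ξ := by
      rw [hD, hM, gSeries_succ]
      ext x
      constructor
      · rintro ⟨y, ⟨m, hm, rfl⟩, rfl⟩
        exact ⟨πN m, hm, (hlift m).symm⟩
      · rintro ⟨t, ht, rfl⟩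
        obtain ⟨m, rfl⟩ := QuotientGroup.mk'_surjective Si t
        exact ⟨(m : G), ⟨m, ht, rfl⟩, (hlift m).symm⟩
    have hDle : D ≤ fRadical 𝔉 (G ⧸ Ri) := by
      rcases fRadical_cases hF (↥N ⧸ Si) with hbot | hTF
      · rw [← hT] at hbot
        rw [hDeq, hbot, Subgroup.map_bot]
        exact bot_le
      · have hDF : 𝔉 ↥D := by
          rw [hDeq]
          exact Fsurj hF.1 (ξ.subgroupMap T) (ξ.subgroupMap_surjective T) (by rw [hT]; exact hTF)
        exact le_sSup ⟨hDnormal, hDF⟩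
    intro x hx
    show x ∈ gSeries (fRadical 𝔉) (fRadical_normal 𝔉) G (i + 1)
    rw [gSeries_succ]
    refine Subgroup.mem_comap.mpr ?_
    exact hDle ⟨x, hx, rfl⟩

end UpDown


theorem gSeries_comap_le {𝔉 : GClass} (hF : IsFittingFormation 𝔉) {G : Type} [Group G]
    [Finite G] (N : Subgroup G) (hN : N.Normal) :
    ∀ i : ℕ, (gSeries (fRadical 𝔉) (fRadical_normal 𝔉) G i).comap N.subtype ≤
      gSeries (fRadical 𝔉) (fRadical_normal 𝔉) ↥N i := by
  letI := hN
  intro i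
  induction i with
  | zero =>
    rw [gSeries_zero, gSeries_zero]
    intro x hx
    simp only [Subgroup.mem_comap, Subgroup.mem_bot] at hx
    exact Subgroup.mem_bot.mpr (Subtype.ext hx)
  | succ i ih =>
    letI hSi : (gSeries (fRadical 𝔉) (fRadical_normal 𝔉) ↥N i).Normal :=
      gSeries_normal _ _ _ _
    letI hRi : (gSeries (fRadical 𝔉) (fRadical_normal 𝔉) G i).Normal :=
      gSeries_normal _ _ _ _
    rcases fRadical_cases hF (G ⧸ gSeries (fRadical 𝔉) (fRadical_normal 𝔉) G i) with hbot | hTF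
    · have hstep : gSeries (fRadical 𝔉) (fRadical_normal 𝔉) G (i + 1) =
          gSeries (fRadical 𝔉) (fRadical_normal 𝔉) G i := by
        rw [gSeries_succ, hbot, MonoidHom.comap_bot, QuotientGroup.ker_mk']
      rw [hstep]
      exact ih.trans (gSeries_le_succ _ _ _ _)
    · set M := gSeries (fRadical 𝔉) (fRadical_normal 𝔉) G (i + 1) ⊓ N with hMdef
      have hMnormal : M.Normal := normal_inf (gSeries_normal _ _ _ _) hN
      have hMleN : M ≤ N := inf_le_right
      set π := QuotientGroup.mk' (gSeries (fRadical 𝔉) (fRadical_normal 𝔉) G i) with hπ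
      set πN := QuotientGroup.mk' (gSeries (fRadical 𝔉) (fRadical_normal 𝔉) ↥N i) with hπN
      set θ : ↥M →* (↥N ⧸ gSeries (fRadical 𝔉) (fRadical_normal 𝔉) ↥N i) :=
        πN.comp (Subgroup.inclusion hMleN) with hθ
      have hDsub : M.map π ≤
          fRadical 𝔉 (G ⧸ gSeries (fRadical 𝔉) (fRadical_normal 𝔉) G i) := by
        rintro y ⟨m, hm, rfl⟩
        have h1 : m ∈ gSeries (fRadical 𝔉) (fRadical_normal 𝔉) G (i + 1) := hm.1
        rw [gSeries_succ] at h1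
        exact Subgroup.mem_comap.mp h1
      have hDnormal : (M.map π).Normal := hMnormal.map π (QuotientGroup.mk'_surjective _)
      have hDF : 𝔉 ↥(M.map π) := by
        refine Fiso hF.1 (Subgroup.subgroupOfEquivOfLe hDsub) ?_
        exact hF.2.2.1 _ ((M.map π).subgroupOf _) (hDnormal.subgroupOf _) hTF
      have hθF : 𝔉 ↥θ.range := by
        refine Ftrans hF.1 (π.subgroupMap M) θ.rangeRestrict
          (π.subgroupMap_surjective M) θ.rangeRestrict_surjective ?_ hDF
        intro m hm
        rw [MonoidHom.mem_ker] at hm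
        have hmval : π (m : G) = 1 := congrArg Subtype.val hm
        have hmRi : (m : G) ∈ gSeries (fRadical 𝔉) (fRadical_normal 𝔉) G i := by
          rwa [hπ, ← MonoidHom.mem_ker, QuotientGroup.ker_mk'] at hmval
        rw [MonoidHom.mem_ker]
        apply Subtype.ext
        show θ m = 1
        rw [hθ, MonoidHom.comp_apply]
        have hincl : Subgroup.inclusion hMleN m ∈
            gSeries (fRadical 𝔉) (fRadical_normal 𝔉) ↥N i := by
          apply ih
          exact Subgroup.mem_comap.mpr hmRi
        rwa [hπN, ← MonoidHom.mem_ker, QuotientGroup.ker_mk']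
      have hrangeEq : θ.range = (M.subgroupOf N).map πN := by
        rw [hθ, MonoidHom.range_comp, Subgroup.inclusion_range]
      have hrange : θ.range ≤ fRadical 𝔉 (↥N ⧸ gSeries (fRadical 𝔉) (fRadical_normal 𝔉) ↥N i) := by
        refine le_sSup ⟨?_, hθF⟩
        rw [hrangeEq]
        exact (hMnormal.subgroupOf N).map _ (QuotientGroup.mk'_surjective _)
      intro x hx
      show x ∈ gSeries (fRadical 𝔉) (fRadical_normal 𝔉) ↥N (i + 1)
      rw [gSeries_succ]
      refine Subgroup.mem_comap.mpr ?_
      refine hrange ⟨⟨(x : G), Subgroup.mem_comap.mp hx, x.2⟩, ?_⟩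
      show πN (Subgroup.inclusion hMleN _) = πN x
      congr 1


theorem fPow_iff_gSeries {𝔉 : GClass} (hF : IsFittingFormation 𝔉) :
    ∀ (n : ℕ) (G : Type) [Group G] [Finite G],
      fPow 𝔉 n G ↔ gSeries (fRadical 𝔉) (fRadical_normal 𝔉) G n = ⊤ := by
  intro n
  induction n with
  | zero =>
    intro G _ _
    rw [gSeries_zero]
    show Subsingleton G ↔ _
    constructor
    · intro hs
      ext x
      simp only [Subgroup.mem_bot, Subgroup.mem_top, iff_true]
      exact Subsingleton.elim x 1
    · intro hbt
      refine ⟨fun a b => ?_⟩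
      have ha : a ∈ (⊥ : Subgroup G) := by rw [hbt]; trivial
      have hb : b ∈ (⊥ : Subgroup G) := by rw [hbt]; trivial
      rw [Subgroup.mem_bot] at ha hb; rw [ha, hb]
  | succ n ih =>
    intro G _ _
    letI hR : (fResidual 𝔉 G).Normal := fResidual_normal 𝔉 G
    letI hRn : (gSeries (fRadical 𝔉) (fRadical_normal 𝔉) G n).Normal := gSeries_normal _ _ _ _
    show fPow 𝔉 n ↥(fResidual 𝔉 G) ↔ _
    rw [ih ↥(fResidual 𝔉 G)]
    constructor
    · intro htop
      have hRle : fResidual 𝔉 G ≤ gSeries (fRadical 𝔉) (fRadical_normal 𝔉) G n := by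
        have h1 := gSeries_map_le hF (fResidual 𝔉 G) hR n
        rw [htop] at h1
        rwa [← MonoidHom.range_eq_map, Subgroup.range_subtype] at h1
      rcases fResidual_cases hF G with hRtop | hQF
      · have hGn : gSeries (fRadical 𝔉) (fRadical_normal 𝔉) G n = ⊤ :=
          le_antisymm le_top (hRtop ▸ hRle)
        exact gSeries_top_mono _ _ _ hGn (Nat.le_succ n)
      · have hle' : fResidual 𝔉 G ≤ Subgroup.comap (MonoidHom.id G)
            (gSeries (fRadical 𝔉) (fRadical_normal 𝔉) G n) := by
          rwa [Subgroup.comap_id]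
        have hsurj : Function.Surjective
            (QuotientGroup.map (fResidual 𝔉 G)
              (gSeries (fRadical 𝔉) (fRadical_normal 𝔉) G n) (MonoidHom.id G) hle') := by
          intro y
          obtain ⟨x, rfl⟩ := QuotientGroup.mk'_surjective _ y
          exact ⟨QuotientGroup.mk x, rfl⟩
        have hQ2 : 𝔉 (G ⧸ gSeries (fRadical 𝔉) (fRadical_normal 𝔉) G n) :=
          Fsurj hF.1 _ hsurj hQF
        have hradtop : fRadical 𝔉 (G ⧸ gSeries (fRadical 𝔉) (fRadical_normal 𝔉) G n) = ⊤ :=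
          fRadical_eq_top hF _ hQ2
        rw [gSeries_succ, hradtop, Subgroup.comap_top]
    · intro htop
      have hT : fRadical 𝔉 (G ⧸ gSeries (fRadical 𝔉) (fRadical_normal 𝔉) G n) = ⊤ := by
        rw [gSeries_succ] at htop
        rw [eq_top_iff]
        intro y _
        obtain ⟨x, rfl⟩ := QuotientGroup.mk'_surjective _ y
        have hx : x ∈ (⊤ : Subgroup G) := trivial
        rw [← htop] at hx
        exact Subgroup.mem_comap.mp hx
      have hRle : fResidual 𝔉 G ≤ gSeries (fRadical 𝔉) (fRadical_normal 𝔉) G n := by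
        rcases fRadical_cases hF (G ⧸ gSeries (fRadical 𝔉) (fRadical_normal 𝔉) G n) with
          hbot | hFQ
        · have hbt : (⊥ : Subgroup (G ⧸ gSeries (fRadical 𝔉) (fRadical_normal 𝔉) G n)) = ⊤ :=
            hbot ▸ hT
          have hq : gSeries (fRadical 𝔉) (fRadical_normal 𝔉) G n = ⊤ := by
            rw [eq_top_iff]
            intro x _
            have h1 : QuotientGroup.mk' _ x ∈
                (⊥ : Subgroup (G ⧸ gSeries (fRadical 𝔉) (fRadical_normal 𝔉) G n)) := by
              rw [hbt]; trivial
            rw [Subgroup.mem_bot] at h1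
            have h2 : x ∈ (QuotientGroup.mk'
                (gSeries (fRadical 𝔉) (fRadical_normal 𝔉) G n)).ker :=
              MonoidHom.mem_ker.mpr h1
            rwa [QuotientGroup.ker_mk'] at h2
          rw [hq]; exact le_top
        · have hFQ' : 𝔉 (G ⧸ gSeries (fRadical 𝔉) (fRadical_normal 𝔉) G n) := by
            rw [hT] at hFQ
            exact Fiso hF.1 Subgroup.topEquiv hFQ
          exact sInf_le ⟨hRn, hFQ'⟩
      have h2 : (gSeries (fRadical 𝔉) (fRadical_normal 𝔉) G n).comap
          (fResidual 𝔉 G).subtype = ⊤ := by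
        rw [eq_top_iff]
        intro x _
        exact Subgroup.mem_comap.mpr (hRle x.2)
      have h3 := gSeries_comap_le hF (fResidual 𝔉 G) hR n
      rw [h2] at h3
      exact le_antisymm le_top h3

/-- for a Fitting formation `𝔉`, the class `𝔉ⁿ` is exactly the class of
finite groups of `𝔉`-height at most `n`. -/
theorem fPow_iff_fHeight_le (𝔉 : GClass) (hF : IsFittingFormation 𝔉) (n : ℕ)
    (G : Type) [Group G] [Finite G] : fPow 𝔉 n G ↔ fHeight 𝔉 G ≤ (n : ℕ∞) :=
  (fPow_iff_gSeries hF n G).trans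
    (gHeight_le_iff (fRadical 𝔉) (fRadical_normal 𝔉) G n).symm
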